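/- Let n ≥ 1, let f, g : Fin n → Fin 2 with f ≠ g, and let E := Matrix.stdBasisMatrix f g 1. Then there exists a real angle φ such that exp(-(Complex.I * φ) • F_z) * E * exp((Complex.I * φ) • F_z) = -E (i.e. E can be sign-inverted by a joint local z-rotation on all n qubits) if and only if the number of sites ℓ with f ℓ = 1 differs from the number of sites ℓ with g ℓ = 1. (Equivalently: the binary strings f and g must not contain the same number of 0's and 1's; otherwise E belongs to the zero root of F_z and is invariant under all joint z-rotations.) -/

import Mathlib

/-!
`F_z` is diagonal, with entry `(n - 2 |h|) / 2` at the configuration `h`, where `|h|` is the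
number of qubits of `h` in state `1`. Conjugating `E = E_{fg}` by the diagonal unitaries
`exp (∓ i φ F_z)` therefore multiplies it by the phase `exp (i φ (|f| - |g|))`, and some real `φ`
makes this phase `-1` exactly when `|f| ≠ |g|`.
-/

open Matrix

/-- A `2^n`-dimensional matrix (indexed by configurations `Fin n → Fin 2`) is a
local unitary if it is the `n`-fold Kronecker product of unitary 2×2 matrices. -/
def IsLocalUnitary {n : ℕ} (K : Matrix (Fin n → Fin 2) (Fin n → Fin 2) ℂ) : Prop :=
  ∃ u : Fin n → Matrix (Fin 2) (Fin 2) ℂ,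
    (∀ ℓ, (u ℓ)ᴴ * u ℓ = 1) ∧ ∀ f g, K f g = ∏ ℓ, u ℓ (f ℓ) (g ℓ)

/-- The Pauli-z operator acting on qubit `ℓ`. -/
def Zop {n : ℕ} (ℓ : Fin n) : Matrix (Fin n → Fin 2) (Fin n → Fin 2) ℂ :=
  fun f g => if f = g then (-1 : ℂ) ^ ((f ℓ : ℕ)) else 0

/-- The Pauli-x operator acting on qubit `ℓ`. -/
def Xop {n : ℕ} (ℓ : Fin n) : Matrix (Fin n → Fin 2) (Fin n → Fin 2) ℂ :=
  fun f g => if f ℓ ≠ g ℓ ∧ ∀ m, m ≠ ℓ → f m = g m then 1 else 0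

/-- The Pauli-y operator acting on qubit `ℓ`. -/
def Yop {n : ℕ} (ℓ : Fin n) : Matrix (Fin n → Fin 2) (Fin n → Fin 2) ℂ :=
  fun f g => if f ℓ ≠ g ℓ ∧ ∀ m, m ≠ ℓ → f m = g m then
    Complex.I * (-1 : ℂ) ^ ((f ℓ : ℕ) + 1) else 0

open Finset

namespace Matrix

lemma diagonal_mul_single_mul_diagonal {l n α : Type*} [Fintype l] [Fintype n] [DecidableEq l]
    [DecidableEq n] [NonUnitalNonAssocSemiring α] (d : l → α) (e : n → α) (i : l) (j : n) (c : α) :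
    diagonal d * single i j c * diagonal e = single i j (d i * c * e j) := by
  ext a b
  rw [mul_diagonal, diagonal_mul]
  by_cases h : i = a ∧ j = b
  · obtain ⟨rfl, rfl⟩ := h
    simp only [single_apply_same]
  · simp only [single_apply, h, if_false, mul_zero, zero_mul]

lemma single_eq_neg_single_iff {n α : Type*} [DecidableEq n] [NegZeroClass α] (i j : n)
    (a b : α) : single i j a = -single i j b ↔ a = -b := by
  rw [single_neg]
  refine ⟨fun h => by simpa only [single_apply_same] using congrFun (congrFun h i) j, ?_⟩
  rintro rfl
  rfl

lemma exp_smul_diagonal {n : Type*} [Fintype n] [DecidableEq n] (c : ℂ) (v : n → ℂ) :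
    NormedSpace.exp (c • diagonal v) = diagonal fun i => Complex.exp (c * v i) := by
  rw [← diagonal_smul, exp_diagonal, Pi.exp_def, Complex.exp_eq_exp_ℂ]
  rfl

end Matrix

lemma Complex.exists_exp_mul_I_mul_eq_neg_one_iff (k : ℝ) :
    (∃ φ : ℝ, Complex.exp (Complex.I * φ * k) = -1) ↔ k ≠ 0 := by
  constructor
  · rintro ⟨φ, hφ⟩ rfl
    norm_num at hφ
  · intro hk
    refine ⟨Real.pi / k, ?_⟩
    have hk' : (k : ℂ) ≠ 0 := Complex.ofReal_ne_zero.mpr hk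
    rw [Complex.ofReal_div, mul_assoc, div_mul_cancel₀ _ hk', mul_comm, Complex.exp_pi_mul_I]

lemma sum_Zop_eq_diagonal (n : ℕ) :
    ∑ ℓ : Fin n, Zop ℓ =
      diagonal fun h : Fin n → Fin 2 => (n : ℂ) - 2 * #{ℓ | h ℓ = 1} := by
  have neg_one_pow (x : Fin 2) : (-1 : ℂ) ^ (x : ℕ) = 1 - 2 * if x = 1 then 1 else 0 := by
    fin_cases x <;> norm_num
  ext a b
  by_cases hab : a = b
  · subst hab
    simp only [Matrix.sum_apply, Zop, if_true, diagonal_apply_eq, neg_one_pow, sum_sub_distrib,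
      ← mul_sum, sum_boole, sum_const, card_univ, Fintype.card_fin, nsmul_one]
  · simp only [Matrix.sum_apply, Zop, hab, if_false, sum_const_zero, diagonal_apply_ne _ hab]

lemma exp_smul_sum_Zop_conj_single (n : ℕ) (f g : Fin n → Fin 2) (φ : ℝ) :
    NormedSpace.exp (-(Complex.I * φ) • ((1 / 2 : ℂ) • ∑ ℓ : Fin n, Zop ℓ)) * single f g 1 *
        NormedSpace.exp ((Complex.I * φ) • ((1 / 2 : ℂ) • ∑ ℓ : Fin n, Zop ℓ)) =
      single f g (Complex.exp (Complex.I * φ * ((#{ℓ | f ℓ = 1} - #{ℓ | g ℓ = 1} : ℝ) : ℂ))) := by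
  simp only [sum_Zop_eq_diagonal, smul_smul, exp_smul_diagonal,
    diagonal_mul_single_mul_diagonal, mul_one, ← Complex.exp_add]
  push_cast
  ring_nf

theorem stmt13_general (n : ℕ) (f g : Fin n → Fin 2) :
    (∃ φ : ℝ,
      NormedSpace.exp (-(Complex.I * (φ : ℂ)) • ((1 / 2 : ℂ) • ∑ ℓ : Fin n, Zop ℓ)) *
          Matrix.single f g (1 : ℂ) *
          NormedSpace.exp ((Complex.I * (φ : ℂ)) • ((1 / 2 : ℂ) • ∑ ℓ : Fin n, Zop ℓ)) =
        -(Matrix.single f g (1 : ℂ))) ↔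
      (Finset.univ.filter fun ℓ : Fin n => f ℓ = 1).card ≠
        (Finset.univ.filter fun ℓ : Fin n => g ℓ = 1).card := by
  simp only [exp_smul_sum_Zop_conj_single, single_eq_neg_single_iff]
  rw [Complex.exists_exp_mul_I_mul_eq_neg_one_iff, sub_ne_zero, Ne, Nat.cast_inj]

theorem stmt13 (n : ℕ) (hn : 1 ≤ n) (f g : Fin n → Fin 2) (hfg : f ≠ g) :
    (∃ φ : ℝ,
      NormedSpace.exp (-(Complex.I * (φ : ℂ)) • ((1 / 2 : ℂ) • ∑ ℓ : Fin n, Zop ℓ)) *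
          Matrix.single f g (1 : ℂ) *
          NormedSpace.exp ((Complex.I * (φ : ℂ)) • ((1 / 2 : ℂ) • ∑ ℓ : Fin n, Zop ℓ)) =
        -(Matrix.single f g (1 : ℂ))) ↔
      (Finset.univ.filter fun ℓ : Fin n => f ℓ = 1).card ≠
        (Finset.univ.filter fun ℓ : Fin n => g ℓ = 1).card :=
  stmt13_general n f g
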